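/- arXiv:0812.4994 — 2 statements merged into one kernel-verified Lean document; each statement's English description precedes it below -/
import Mathlib

section
/- For an odd prime p and nonzero a in F_p, the sum over r_0 in F_p^* and r_1 in F_p of ((-r_0)/p) * psi(-r_1*(a/r_0 + 2)) equals p * ((2a)/p), where psi is a nontrivial additive character of F_p. -/
open Finset

/-! By orthogonality of the primitive character `ψ`, the inner sum over `r₁` vanishes unless
`a / r₀ + 2 = 0`, i.e. `r₀ = -a / 2`, where it equals `p`. That single term is
`p * ((a/2)/p) = p * ((2a)/p)`, as the quadratic character is its own inverse. -/

theorem div_add_eq_zero_iff_eq_neg_div {F : Type*} [Field F] {a c u : F} (hc : c ≠ 0)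
    (hu : u ≠ 0) : a / u + c = 0 ↔ u = -a / c := by
  rw [div_add' _ _ _ hu, div_eq_zero_iff, or_iff_left hu, eq_div_iff hc]
  constructor <;> intro h <;> linear_combination h

theorem MulChar.IsQuadratic.map_div {F R : Type*} [Field F] [CommRing R] {χ : MulChar F R}
    (hχ : χ.IsQuadratic) (a b : F) : χ (a / b) = χ (a * b) := by
  rw [div_eq_mul_inv, map_mul, map_mul, ← MulChar.inv_apply', hχ.inv]

theorem Units.sum_ite_val_eq {G₀ M : Type*} [GroupWithZero G₀] [Fintype G₀ˣ] [DecidableEq G₀]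
    [AddCommMonoid M] {b : G₀} (hb : b ≠ 0) (f : G₀ → M) :
    ∑ u : G₀ˣ, (if (u : G₀) = b then f u else 0) = f b := by
  have hval : ∀ u : G₀ˣ, (u : G₀) = b ↔ u = Units.mk0 b hb := fun u => by
    rw [Units.ext_iff, Units.val_mk0]
  simp only [hval, Fintype.sum_ite_eq', Units.val_mk0]

/-- For an odd prime `p`, nonzero `a ∈ 𝔽_p` and a nontrivial additive character `ψ` of `𝔽_p`,
`∑_{r₀ ∈ 𝔽_p^*} ∑_{r₁ ∈ 𝔽_p} ((-r₀)/p) ψ(-r₁(a/r₀ + 2)) = p * ((2a)/p)`,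
where `(·/p)` is the Legendre symbol (the quadratic character of `𝔽_p`). -/
theorem double_sum_legendre (p : ℕ) [Fact p.Prime] (hp : p ≠ 2)
    (a : ZMod p) (ha : a ≠ 0) (ψ : AddChar (ZMod p) ℂ) (hψ : ψ ≠ 1) :
    ∑ r₀ : (ZMod p)ˣ, ∑ r₁ : ZMod p,
        (quadraticChar (ZMod p) (-(r₀ : ZMod p)) : ℂ) * ψ (-r₁ * (a / (r₀ : ZMod p) + 2))
      = (p : ℂ) * (quadraticChar (ZMod p) (2 * a) : ℂ) := by
  have h2 : (2 : ZMod p) ≠ 0 := Ring.two_ne_zero (by rwa [ZMod.ringChar_zmod_n])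
  have inner (r₀ : (ZMod p)ˣ) : ∑ r₁ : ZMod p, ψ (-r₁ * (a / (r₀ : ZMod p) + 2))
      = if (r₀ : ZMod p) = -a / 2 then (p : ℂ) else 0 := by
    simp_rw [neg_mul, ← mul_neg]
    rw [AddChar.sum_mulShift _ (AddChar.IsPrimitive.of_ne_one hψ), ZMod.card]
    simp only [neg_eq_zero, div_add_eq_zero_iff_eq_neg_div h2 r₀.ne_zero, Nat.cast_ite,
      Nat.cast_zero]
  calc _ = ∑ r₀ : (ZMod p)ˣ, if (r₀ : ZMod p) = -a / 2
          then (quadraticChar (ZMod p) (-(r₀ : ZMod p)) : ℂ) * p else 0 := by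
        simp_rw [← mul_sum, inner, mul_ite, mul_zero]
    _ = (quadraticChar (ZMod p) (a / 2) : ℂ) * p := by
        rw [Units.sum_ite_val_eq (div_ne_zero (neg_ne_zero.mpr ha) h2)
          (fun x => (quadraticChar (ZMod p) (-x) : ℂ) * p), neg_div, neg_neg]
    _ = _ := by
        rw [(quadraticChar_isQuadratic _).map_div, mul_comm, mul_comm a]
end

section
/- Let G be a finite group, H a subgroup of index 2, and V an irreducible representation of H over an algebraically closed field of characteristic 0 such that the two conjugates of V under G/H are non-isomorphic. If W is an irreducible representation of G whose restriction to H contains V, then W is isomorphic to the induced representation Ind_H^G(V). -/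
/-!
Model `Ind_H^G V` as Mathlib's `coindV H.subtype ρ`: functions `f : G → V` with
`f (h * g) = ρ h (f g)`. For `g₀ ∉ H` such an `f` is determined by `f 1` and `f g₀`, and
restricted to `H` the two evaluations realise `Ind V ≅ V ⊕ V^{g₀}`. A `G`-stable subspace `U`
either contains every `f` with `f g₀ = 0` (and then, translating by `g₀`, everything), or
meets that space trivially; in the second case, if `U ≠ 0`, both evaluations are isomorphisms
`U ≅ V` and together give `V ≅ V^{g₀}`, which is excluded. So `Ind V` is irreducible.
Frobenius reciprocity turns `ι` into the nonzero `G`-map `f ↦ ι (f 1) + g₀⁻¹ • ι (f g₀)` from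
`Ind V` to `W`, an isomorphism by Schur's lemma; `e` is its inverse.
-/

open Representation

namespace Representation

variable {k G V W : Type*} [CommRing k] [AddCommGroup V] [Module k V] [AddCommGroup W] [Module k W]

def IsIrreducibleOrZero [Monoid G] (ρ : Representation k G V) : Prop :=
  ∀ U : Submodule k V, (∀ (g : G) (v : V), v ∈ U → ρ g v ∈ U) → U = ⊥ ∨ U = ⊤

theorem IsIrreducibleOrZero.bijective [Monoid G] {ρ : Representation k G V}
    {σ : Representation k G W} (hρ : ρ.IsIrreducibleOrZero) (hσ : σ.IsIrreducibleOrZero)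
    {f : V →ₗ[k] W} (hf : ∀ g v, f (ρ g v) = σ g (f v)) (hf0 : f ≠ 0) : Function.Bijective f := by
  constructor
  · rcases hρ (LinearMap.ker f) (fun g v hv => by simp_all) with h | h
    · exact LinearMap.ker_eq_bot.mp h
    · exact absurd (LinearMap.ker_eq_top.mp h) hf0
  · rcases hσ (LinearMap.range f) (by rintro g _ ⟨v, rfl⟩; exact ⟨ρ g v, hf g v⟩) with h | h
    · exact absurd (LinearMap.range_eq_bot.mp h) hf0
    · exact LinearMap.range_eq_top.mp h

section coind

variable [Group G] {H : Subgroup G} (ρ : Representation k H V)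

def coindEval (g : G) : coindV H.subtype ρ →ₗ[k] V :=
  LinearMap.proj g ∘ₗ (coindV H.subtype ρ).subtype

@[simp]
lemma coindEval_coind (g σ : G) (x : coindV H.subtype ρ) :
    coindEval ρ g (coind H.subtype ρ σ x) = coindEval ρ (g * σ) x := rfl

lemma coindEval_mul (h : H) (g : G) (x : coindV H.subtype ρ) :
    coindEval ρ (h * g) x = ρ h (coindEval ρ g x) := x.2 h g

lemma coindEval_one_coind (h : H) (x : coindV H.subtype ρ) :
    coindEval ρ 1 (coind H.subtype ρ h x) = ρ h (coindEval ρ 1 x) := by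
  rw [coindEval_coind, one_mul, ← coindEval_mul, mul_one]

lemma map_coindEval_one_invariant {U : Submodule k (coindV H.subtype ρ)}
    (hU : ∀ (h : H) (x : coindV H.subtype ρ), x ∈ U → coind H.subtype ρ h x ∈ U)
    (h : H) (v : V) (hv : v ∈ U.map (coindEval ρ 1)) : ρ h v ∈ U.map (coindEval ρ 1) := by
  obtain ⟨x, hx, rfl⟩ := hv
  exact ⟨coind H.subtype ρ h x, hU h x hx, coindEval_one_coind ρ h x⟩

lemma coindEval_mul_conj [hnorm : H.Normal] (g : G) (h : H) (x : coindV H.subtype ρ) :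
    coindEval ρ (g * h) x = ρ ⟨g * h * g⁻¹, hnorm.conj_mem h h.2 g⟩ (coindEval ρ g x) := by
  rw [← coindEval_mul, inv_mul_cancel_right]

lemma coindEval_mul_self_of_index_eq_two (hH : H.index = 2) (g : G) (x : coindV H.subtype ρ) :
    coindEval ρ (g * g) x =
      ρ ⟨g * g, Subgroup.mul_self_mem_of_index_two hH g⟩ (coindEval ρ 1 x) := by
  rw [← coindEval_mul, mul_one]

open Classical in
noncomputable def coindExtendByZero (v : V) : coindV H.subtype ρ where
  val g := if hg : g ∈ H then ρ ⟨g, hg⟩ v else 0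
  property h g := by
    by_cases hg : g ∈ H
    · simp only [Subgroup.coe_subtype, dif_pos hg, ← Module.End.mul_apply, ← map_mul]
      exact dif_pos (H.mul_mem h.2 hg)
    · simp [hg, (H.mul_mem_cancel_left h.2).not.mpr hg]

lemma coindEval_one_coindExtendByZero (v : V) : coindEval ρ 1 (coindExtendByZero ρ v) = v := by
  simp [coindEval, coindExtendByZero, show (⟨1, H.one_mem⟩ : H) = 1 from rfl]

lemma coindEval_coindExtendByZero_of_not_mem {g : G} (hg : g ∉ H) (v : V) :
    coindEval ρ g (coindExtendByZero ρ v) = 0 := by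
  simp [coindEval, coindExtendByZero, hg]

/-- Frobenius reciprocity, with `1, g₀` as representatives of the cosets of `H`. -/
def coindLift (ρW : Representation k G W) (ι : V →ₗ[k] W) (g₀ : G) :
    coindV H.subtype ρ →ₗ[k] W :=
  ι ∘ₗ coindEval ρ 1 + ρW g₀⁻¹ ∘ₗ ι ∘ₗ coindEval ρ g₀

lemma coindLift_ne_zero {ρW : Representation k G W} {ι : V →ₗ[k] W} (hι : ι ≠ 0) {g₀ : G}
    (hg₀ : g₀ ∉ H) : coindLift ρ ρW ι g₀ ≠ 0 := by
  obtain ⟨v, hv⟩ : ∃ v, ι v ≠ 0 := by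
    by_contra! h
    exact hι (LinearMap.ext h)
  refine fun h0 => hv ?_
  simpa [coindLift, coindEval_one_coindExtendByZero,
    coindEval_coindExtendByZero_of_not_mem ρ hg₀] using LinearMap.congr_fun h0 (coindExtendByZero ρ v)

variable {ρ} (hH : H.index = 2) {g₀ : G} (hg₀ : g₀ ∉ H)
include hH hg₀

theorem coindV_ext_of_index_eq_two {x y : coindV H.subtype ρ}
    (h₁ : coindEval ρ 1 x = coindEval ρ 1 y) (h₀ : coindEval ρ g₀ x = coindEval ρ g₀ y) :
    x = y := by
  suffices ∀ g, coindEval ρ g x = coindEval ρ g y from Subtype.ext (funext this)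
  intro g
  by_cases hg : g ∈ H
  · obtain ⟨h, rfl⟩ : ∃ h : H, (h : G) * 1 = g := ⟨⟨g, hg⟩, mul_one g⟩
    rw [coindEval_mul, coindEval_mul, h₁]
  · have hgg₀ : g * g₀⁻¹ ∈ H := by
      rw [Subgroup.mul_mem_iff_of_index_two hH]; simp [hg, hg₀]
    obtain ⟨h, rfl⟩ : ∃ h : H, (h : G) * g₀ = g := ⟨⟨g * g₀⁻¹, hgg₀⟩, inv_mul_cancel_right g g₀⟩
    rw [coindEval_mul, coindEval_mul, h₀]

theorem coindLift_coind {ρW : Representation k G W} {ι : V →ₗ[k] W}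
    (hι : ∀ (h : H) (v : V), ι (ρ h v) = ρW h (ι v)) (σ : G) (x : coindV H.subtype ρ) :
    coindLift ρ ρW ι g₀ (coind H.subtype ρ σ x) = ρW σ (coindLift ρ ρW ι g₀ x) := by
  have hx : ∀ (h : H) (g : G), ι (coindEval ρ (h * g) x) = ρW h (ι (coindEval ρ g x)) :=
    fun h g => by rw [coindEval_mul, hι]
  simp only [coindLift, LinearMap.add_apply, LinearMap.comp_apply, coindEval_coind, one_mul,
    map_add]
  by_cases hσ : σ ∈ H
  · have hconj : g₀ * σ * g₀⁻¹ ∈ H := (Subgroup.normal_of_index_eq_two hH).conj_mem σ hσ g₀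
    have e₁ := hx ⟨σ, hσ⟩ 1
    have e₀ := hx ⟨g₀ * σ * g₀⁻¹, hconj⟩ g₀
    simp only [mul_one, inv_mul_cancel_right] at e₁ e₀
    rw [e₁, e₀]
    simp [map_mul]
  · have h₁ : σ * g₀⁻¹ ∈ H := by
      rw [Subgroup.mul_mem_iff_of_index_two hH]; simp [hσ, hg₀]
    have h₀ : g₀ * σ ∈ H := by
      rw [Subgroup.mul_mem_iff_of_index_two hH]; simp [hσ, hg₀]
    have e₁ := hx ⟨σ * g₀⁻¹, h₁⟩ g₀
    have e₀ := hx ⟨g₀ * σ, h₀⟩ 1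
    simp only [mul_one, inv_mul_cancel_right] at e₁ e₀
    rw [e₁, e₀, add_comm]
    simp [map_mul]

variable {U : Submodule k (coindV H.subtype ρ)}
  (hU : ∀ (σ : G) (x : coindV H.subtype ρ), x ∈ U → coind H.subtype ρ σ x ∈ U)
include hU

lemma eq_top_of_map_coindEval_ker_eq_top
    (hA : (U ⊓ LinearMap.ker (coindEval ρ g₀)).map (coindEval ρ 1) = ⊤) : U = ⊤ := by
  have hsurj (v : V) : ∃ x ∈ U, coindEval ρ g₀ x = 0 ∧ coindEval ρ 1 x = v := by
    obtain ⟨x, ⟨hxU, hx₀⟩, hx₁⟩ := hA ▸ Submodule.mem_top (x := v)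
    exact ⟨x, hxU, hx₀, hx₁⟩
  rw [Submodule.eq_top_iff']
  intro y
  obtain ⟨a, ha, ha₀, ha₁⟩ := hsurj (coindEval ρ 1 y)
  obtain ⟨b, hb, hb₀, hb₁⟩ :=
    hsurj (ρ ⟨g₀ * g₀, Subgroup.mul_self_mem_of_index_two hH g₀⟩⁻¹ (coindEval ρ g₀ y))
  convert U.add_mem ha (hU g₀ b hb)
  refine coindV_ext_of_index_eq_two hH hg₀ ?_ ?_
  · simp only [map_add, coindEval_coind, one_mul, ha₁, hb₀, add_zero]
  · simp only [map_add, coindEval_coind, ha₀, coindEval_mul_self_of_index_eq_two ρ hH, hb₁,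
      self_inv_apply, zero_add]

omit hU in
lemma disjoint_ker_coindEval_of_map_eq_bot
    (hA : (U ⊓ LinearMap.ker (coindEval ρ g₀)).map (coindEval ρ 1) = ⊥) :
    Disjoint U (LinearMap.ker (coindEval ρ g₀)) := by
  refine Submodule.disjoint_def.mpr fun x hx h₀ => ?_
  have h₁ : coindEval ρ 1 x ∈ (⊥ : Submodule k V) := hA ▸ Submodule.mem_map_of_mem ⟨hx, h₀⟩
  exact coindV_ext_of_index_eq_two hH hg₀ (by simpa using h₁) (by simpa using h₀)

lemma disjoint_ker_coindEval_one (h₀ : Disjoint U (LinearMap.ker (coindEval ρ g₀))) :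
    Disjoint U (LinearMap.ker (coindEval ρ 1)) := by
  refine Submodule.disjoint_def.mpr fun x hx h₁ => ?_
  have hx' : coind H.subtype ρ g₀ x = 0 :=
    Submodule.disjoint_def.mp h₀ _ (hU g₀ x hx) (show coindEval ρ g₀ _ = 0 by
      rw [coindEval_coind, coindEval_mul_self_of_index_eq_two ρ hH, LinearMap.mem_ker.mp h₁,
        map_zero])
  refine coindV_ext_of_index_eq_two hH hg₀ (by simpa using h₁) ?_
  simpa only [coindEval_coind, one_mul, map_zero] using congrArg (coindEval ρ 1) hx'

lemma exists_conj_equiv_of_disjoint_ker_coindEval [hnorm : H.Normal] (hρ : ρ.IsIrreducibleOrZero)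
    (h₀ : Disjoint U (LinearMap.ker (coindEval ρ g₀))) (hU₀ : U ≠ ⊥) :
    ∃ e : V ≃ₗ[k] V, ∀ (h : H) (v : V),
      e (ρ h v) = ρ ⟨g₀ * h * g₀⁻¹, hnorm.conj_mem h h.2 g₀⟩ (e v) := by
  have h₁ := disjoint_ker_coindEval_one hH hg₀ hU h₀
  have surj₁ : U.map (coindEval ρ 1) = ⊤ :=
    (hρ _ (map_coindEval_one_invariant ρ fun h => hU h)).resolve_left
      fun hbot => hU₀ (h₁.eq_bot_of_le (LinearMap.le_ker_iff_map.mpr hbot))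
  have surj₀ : U.map (coindEval ρ g₀) = ⊤ := by
    refine eq_top_iff.mpr fun v _ => ?_
    obtain ⟨x, hx, rfl⟩ := surj₁ ▸ Submodule.mem_top (x := v)
    exact ⟨_, hU g₀⁻¹ x hx, by rw [coindEval_coind, mul_inv_cancel]⟩
  let E (g : G) (hinj : Disjoint U (LinearMap.ker (coindEval ρ g)))
      (hsurj : U.map (coindEval ρ g) = ⊤) : U ≃ₗ[k] V :=
    .ofBijective ((coindEval ρ g).domRestrict U) ⟨LinearMap.injective_domRestrict_iff.mpr hinj,
      LinearMap.range_eq_top.mp ((LinearMap.range_domRestrict _ _).trans hsurj)⟩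
  refine ⟨(E 1 h₁ surj₁).symm.trans (E g₀ h₀ surj₀), fun h v => ?_⟩
  obtain ⟨x, rfl⟩ := (E 1 h₁ surj₁).surjective v
  have hx : (E 1 h₁ surj₁).symm (ρ h (E 1 h₁ surj₁ x)) = ⟨coind H.subtype ρ h x, hU h x x.2⟩ :=
    (E 1 h₁ surj₁).symm_apply_eq.mpr (coindEval_one_coind ρ h x).symm
  rw [LinearEquiv.trans_apply, LinearEquiv.trans_apply, hx, LinearEquiv.symm_apply_apply]
  exact coindEval_mul_conj ρ g₀ h x

omit hU in
theorem isIrreducibleOrZero_coind_of_index_eq_two [hnorm : H.Normal] (hρ : ρ.IsIrreducibleOrZero)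
    (hconj : ¬ ∃ e : V ≃ₗ[k] V, ∀ (h : H) (v : V),
      e (ρ h v) = ρ ⟨g₀ * h * g₀⁻¹, hnorm.conj_mem h h.2 g₀⟩ (e v)) :
    (coind H.subtype ρ).IsIrreducibleOrZero := by
  intro U hU
  have hker (h : H) (x) (hx : x ∈ U ⊓ LinearMap.ker (coindEval ρ g₀)) :
      coind H.subtype ρ h x ∈ U ⊓ LinearMap.ker (coindEval ρ g₀) :=
    ⟨hU h x hx.1, show coindEval ρ g₀ _ = 0 by
      rw [coindEval_coind, coindEval_mul_conj, LinearMap.mem_ker.mp hx.2,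
        map_zero]⟩
  rcases hρ _ (map_coindEval_one_invariant ρ hker) with hA | hA
  · exact .inl (by_contra fun hU₀ => hconj (exists_conj_equiv_of_disjoint_ker_coindEval hH hg₀ hU hρ
      (disjoint_ker_coindEval_of_map_eq_bot hH hg₀ hA) hU₀))
  · exact .inr (eq_top_of_map_coindEval_ker_eq_top hH hg₀ hU hA)

end coind

end Representation

theorem irreducible_restriction_induced_general
    (k : Type*) [Field k]
    (G : Type*) [Group G] (H : Subgroup G) [hnorm : H.Normal]
    (hH : H.index = 2)
    (V W : Type*) [AddCommGroup V] [Module k V] [AddCommGroup W] [Module k W]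
    (ρ : Representation k H V) (ρW : Representation k G W)
    (hVirr : ∀ U : Submodule k V, (∀ (h : H) (v : V), v ∈ U → ρ h v ∈ U) → U = ⊥ ∨ U = ⊤)
    (hWirr : ∀ U : Submodule k W, (∀ (g : G) (w : W), w ∈ U → ρW g w ∈ U) → U = ⊥ ∨ U = ⊤)
    (hconj : ∀ g : G, g ∉ H → ¬ ∃ e : V ≃ₗ[k] V, ∀ (h : H) (v : V),
        e (ρ h v) = ρ ⟨g * (h : G) * g⁻¹, hnorm.conj_mem (h : G) h.2 g⟩ (e v))
    (ι : V →ₗ[k] W) (hι : Function.Injective ι)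
    (hιequiv : ∀ (h : H) (v : V), ι (ρ h v) = ρW (h : G) (ι v)) :
    ∃ e : W →ₗ[k] (G → V), Function.Injective e ∧
      (∀ (σ : G) (w : W) (g : G), e (ρW σ w) g = e w (g * σ)) ∧
      Set.range (fun w => e w)
        = {f : G → V | ∀ (h : H) (g : G), f ((h : G) * g) = ρ h (f g)} := by
  obtain ⟨g₀, hg₀⟩ : ∃ g₀, g₀ ∉ H :=
    SetLike.exists_not_mem_of_ne_top H fun hH₁ => by simp [hH₁] at hH
  have : Nontrivial V := not_subsingleton_iff_nontrivial.mp fun _ =>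
    hconj g₀ hg₀ ⟨LinearEquiv.refl k V, fun _ _ => Subsingleton.elim _ _⟩
  let Φ := LinearEquiv.ofBijective (coindLift ρ ρW ι g₀)
    ((isIrreducibleOrZero_coind_of_index_eq_two hH hg₀ hVirr (hconj g₀ hg₀)).bijective hWirr
      (coindLift_coind hH hg₀ hιequiv)
      (coindLift_ne_zero ρ (LinearMap.ne_zero_of_injective hι) hg₀))
  have hΦ (σ : G) (w : W) : Φ.symm (ρW σ w) = coind H.subtype ρ σ (Φ.symm w) := by
    refine Φ.symm_apply_eq.mpr ?_
    change _ = coindLift ρ ρW ι g₀ _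
    rw [coindLift_coind hH hg₀ hιequiv]
    exact congrArg (ρW σ) (Φ.apply_symm_apply w).symm
  refine ⟨(coindV H.subtype ρ).subtype ∘ₗ Φ.symm.toLinearMap,
    Subtype.val_injective.comp Φ.symm.injective, fun σ w g => ?_, ?_⟩
  · rw [LinearMap.comp_apply, LinearEquiv.coe_coe, hΦ]
    rfl
  · change Set.range (Subtype.val ∘ Φ.symm) = (coindV H.subtype ρ : Set (G → V))
    rw [Set.range_comp, Φ.symm.surjective.range_eq, Set.image_univ, Subtype.range_coe]

/-- Clifford-theory statement: if `H ≤ G` has index 2, `V` is an irreducible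
`H`-representation whose conjugate by any `g ∉ H` is not isomorphic to `V`, and `W` is an
irreducible `G`-representation whose restriction to `H` contains `V`, then `W` is
isomorphic to the induced representation `Ind_H^G(V)` (realized as the space of functions
`f : G → V` with `f(hg) = ρ(h) f(g)`, with `G` acting by right translation). -/
theorem irreducible_restriction_induced
    (k : Type*) [Field k] [IsAlgClosed k] [CharZero k]
    (G : Type*) [Group G] [Fintype G] (H : Subgroup G) [hnorm : H.Normal]
    (hH : H.index = 2)
    (V W : Type*) [AddCommGroup V] [Module k V] [AddCommGroup W] [Module k W]
    (ρ : Representation k H V) (ρW : Representation k G W)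
    (hVirr : ∀ U : Submodule k V, (∀ (h : H) (v : V), v ∈ U → ρ h v ∈ U) → U = ⊥ ∨ U = ⊤)
    (hWirr : ∀ U : Submodule k W, (∀ (g : G) (w : W), w ∈ U → ρW g w ∈ U) → U = ⊥ ∨ U = ⊤)
    (hconj : ∀ g : G, g ∉ H → ¬ ∃ e : V ≃ₗ[k] V, ∀ (h : H) (v : V),
        e (ρ h v) = ρ ⟨g * (h : G) * g⁻¹, hnorm.conj_mem (h : G) h.2 g⟩ (e v))
    (ι : V →ₗ[k] W) (hι : Function.Injective ι)
    (hιequiv : ∀ (h : H) (v : V), ι (ρ h v) = ρW (h : G) (ι v)) :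
    ∃ e : W →ₗ[k] (G → V), Function.Injective e ∧
      (∀ (σ : G) (w : W) (g : G), e (ρW σ w) g = e w (g * σ)) ∧
      Set.range (fun w => e w)
        = {f : G → V | ∀ (h : H) (g : G), f ((h : G) * g) = ρ h (f g)} :=
  irreducible_restriction_induced_general k G H (hnorm := hnorm) hH V W ρ ρW hVirr hWirr hconj ι hι
    hιequiv
end
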